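/- arXiv:1902.08149 — 5 statements merged into one kernel-verified Lean document; each statement's English description precedes it below -/
import Mathlib

section
/- If nondeterministic automata A and A' are SCC-unambiguous (unambiguous from p to q for every pair of states p,q lying in the same strongly connected component), then the product automaton A × A' is SCC-unambiguous. -/
variable {Q Q' A R : Type*}

/-- `RunFrom Δ p w ρ`: `ρ` is the list of states visited after `p` along a run
reading `w` that starts in `p`. -/
def RunFrom (Δ : Q → A → Q → Prop) : Q → List A → List Q → Prop
  | _, [], [] => True
  | p, a :: w, q :: ρ => Δ p a q ∧ RunFrom Δ q w ρ
  | _, _, _ => False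

/-- There is a run from `p` to `q` reading `w`. -/
def HasRun (Δ : Q → A → Q → Prop) (p : Q) (w : List A) (q : Q) : Prop :=
  ∃ ρ, RunFrom Δ p w ρ ∧ (p :: ρ).getLast (List.cons_ne_nil _ _) = q

/-- `m`-fold power of a word. -/
def wpow (u : List A) (m : ℕ) : List A := (List.replicate m u).flatten

/-- Aperiodicity of a nondeterministic automaton. -/
def Aperiodic (Δ : Q → A → Q → Prop) : Prop :=
  ∃ m, 1 ≤ m ∧ ∀ (p q : Q) (u : List A), u ≠ [] →
    (HasRun Δ p (wpow u m) q ↔ HasRun Δ p (wpow u (m + 1)) q)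

/-- `p` and `q` are in the same strongly connected component. -/
def SameSCC (Δ : Q → A → Q → Prop) (p q : Q) : Prop :=
  p = q ∨ ((∃ u : List A, u ≠ [] ∧ HasRun Δ p u q) ∧ (∃ v : List A, v ≠ [] ∧ HasRun Δ q v p))

/-- The automaton is unambiguous from `p` to `q`. -/
def UnambFromTo (Δ : Q → A → Q → Prop) (p q : Q) : Prop :=
  ∀ (u : List A) (ρ₁ ρ₂ : List Q), u ≠ [] →
    RunFrom Δ p u ρ₁ → RunFrom Δ p u ρ₂ →
    (p :: ρ₁).getLast (List.cons_ne_nil _ _) = q →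
    (p :: ρ₂).getLast (List.cons_ne_nil _ _) = q → ρ₁ = ρ₂

def SCCUnambiguous (Δ : Q → A → Q → Prop) : Prop :=
  ∀ p q : Q, SameSCC Δ p q → UnambFromTo Δ p q

/-- The set of accepting runs on `w`, represented as pairs of an initial state and
the list of subsequently visited states. -/
def AccRuns (Δ : Q → A → Q → Prop) (I F : Set Q) (w : List A) : Set (Q × List Q) :=
  {x | x.1 ∈ I ∧ RunFrom Δ x.1 w x.2 ∧ (x.1 :: x.2).getLast (List.cons_ne_nil _ _) ∈ F}

/-- The sequence of weights along a run. -/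
def wgtSeq (wgt : Q → A → Q → R) : Q → List A → List Q → List R
  | p, a :: w, q :: ρ => wgt p a q :: wgtSeq wgt q w ρ
  | _, _, _ => []


/-- Product transition relation. -/
def prodTrans (Δ : Q → A → Q → Prop) (Δ' : Q' → A → Q' → Prop) :
    Q × Q' → A → Q × Q' → Prop :=
  fun p a q => Δ p.1 a q.1 ∧ Δ' p.2 a q.2

/-! A run of the product projects to a run of each factor, so the projections of two runs of
the product between states of one SCC are runs of a factor between states of one SCC; by
unambiguity of the factors the projections agree, and a list of pairs is determined by its
two projections. -/

theorem List.ext_map_fst_snd {α β : Type*} {l₁ l₂ : List (α × β)}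
    (h₁ : l₁.map Prod.fst = l₂.map Prod.fst) (h₂ : l₁.map Prod.snd = l₂.map Prod.snd) :
    l₁ = l₂ := by
  rw [← List.zip_unzip l₁, ← List.zip_unzip l₂, List.unzip_fst, List.unzip_fst, List.unzip_snd,
    List.unzip_snd, h₁, h₂]

section Simulation

variable {P : Type*} {Δ : Q → A → Q → Prop} {Δ₂ : P → A → P → Prop} {f : Q → P}

theorem getLast_cons_map (p : Q) (ρ : List Q) :
    (f p :: ρ.map f).getLast (List.cons_ne_nil _ _) =
      f ((p :: ρ).getLast (List.cons_ne_nil _ _)) :=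
  List.getLast_map (l := p :: ρ) _

theorem RunFrom.map (hf : ∀ p a q, Δ p a q → Δ₂ (f p) a (f q)) :
    ∀ {p : Q} {u : List A} {ρ : List Q}, RunFrom Δ p u ρ → RunFrom Δ₂ (f p) u (ρ.map f)
  | _, [], [], _ => trivial
  | p, a :: _, q :: _, ⟨hpq, hρ⟩ => ⟨hf p a q hpq, hρ.map hf⟩

theorem HasRun.map (hf : ∀ p a q, Δ p a q → Δ₂ (f p) a (f q)) {p q : Q} {u : List A}
    (h : HasRun Δ p u q) : HasRun Δ₂ (f p) u (f q) := by
  obtain ⟨ρ, hρ, rfl⟩ := h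
  exact ⟨ρ.map f, hρ.map hf, getLast_cons_map p ρ⟩

theorem SameSCC.map (hf : ∀ p a q, Δ p a q → Δ₂ (f p) a (f q)) {p q : Q}
    (h : SameSCC Δ p q) : SameSCC Δ₂ (f p) (f q) := by
  rcases h with rfl | ⟨⟨u, hu, hpq⟩, ⟨v, hv, hqp⟩⟩
  · exact Or.inl rfl
  · exact Or.inr ⟨⟨u, hu, hpq.map hf⟩, ⟨v, hv, hqp.map hf⟩⟩

theorem SCCUnambiguous.map_eq_of_map (hf : ∀ p a q, Δ p a q → Δ₂ (f p) a (f q))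
    (h : SCCUnambiguous Δ₂) {p q : Q} (hpq : SameSCC Δ p q) : ∀ {u : List A} {ρ₁ ρ₂ : List Q},
    u ≠ [] → RunFrom Δ p u ρ₁ → RunFrom Δ p u ρ₂ →
    (p :: ρ₁).getLast (List.cons_ne_nil _ _) = q →
    (p :: ρ₂).getLast (List.cons_ne_nil _ _) = q → ρ₁.map f = ρ₂.map f :=
  fun hu hρ₁ hρ₂ hl₁ hl₂ => h _ _ (hpq.map hf) _ _ _ hu (hρ₁.map hf) (hρ₂.map hf)
    (by rw [getLast_cons_map, hl₁]) (by rw [getLast_cons_map, hl₂])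

end Simulation

/-- If two nondeterministic automata are SCC-unambiguous, then so is their product. -/
theorem sccUnambiguous_prodTrans (Δ : Q → A → Q → Prop) (Δ' : Q' → A → Q' → Prop)
    (h : SCCUnambiguous Δ) (h' : SCCUnambiguous Δ') :
    SCCUnambiguous (prodTrans Δ Δ') := by
  intro p q hpq u ρ₁ ρ₂ hu hρ₁ hρ₂ hl₁ hl₂
  exact List.ext_map_fst_snd
    (h.map_eq_of_map (fun _ _ _ ht => ht.1) hpq hu hρ₁ hρ₂ hl₁ hl₂)
    (h'.map_eq_of_map (fun _ _ _ ht => ht.2) hpq hu hρ₁ hρ₂ hl₁ hl₂)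
end

section
/- Let A be a trimmed nondeterministic automaton (every state is reachable from an initial state and co-reachable to a final state). Then A is polynomially ambiguous (the number of accepting runs on any word w is bounded by a polynomial in |w|) if and only if A is SCC-unambiguous. -/
variable {Q Q' A R : Type*}

/-!
If two distinct runs on one word connect two states of an SCC, closing them up gives two
distinct loops on a word `s` at a state `p`. Since `p` lies on an accepting run, inserting `s ^ m`
there yields `2 ^ m` accepting runs on a word of length linear in `m`, which no polynomial bounds.

Conversely, call a transition of a run that leaves an SCC a break. Between two breaks a run stays
in one SCC, where SCC-unambiguity determines it by its endpoints; so a run is determined by its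
first and last state and its breaks together with their positions. A state left by a break is never
visited again, so a run has at most `|Q|` breaks, and there are at most
`|Q|² (|Q|² (|w| + 1) + 1) ^ |Q|` accepting runs on `w`.
-/

lemma List.getLastD_append {α : Type*} (a : α) (l₁ l₂ : List α) :
    (l₁ ++ l₂).getLastD a = l₂.getLastD (l₁.getLastD a) := by
  cases l₂ <;> simp

lemma List.flatMap_inj_of_length_eq {α β : Type*} {g : β → List α} (hg : Function.Injective g)
    (hlen : ∀ b b', (g b).length = (g b').length) :
    ∀ {cs₁ cs₂ : List β}, cs₁.length = cs₂.length → cs₁.flatMap g = cs₂.flatMap g → cs₁ = cs₂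
  | [], [], _, _ => rfl
  | b₁ :: cs₁, b₂ :: cs₂, hl, h => by
    rw [List.flatMap_cons, List.flatMap_cons] at h
    obtain ⟨hb, hcs⟩ := List.append_inj h (hlen b₁ b₂)
    rw [hg hb, List.flatMap_inj_of_length_eq hg hlen (Nat.succ_inj.1 hl) hcs]

lemma length_wpow (u : List A) (m : ℕ) : (wpow u m).length = m * u.length := by
  simp [wpow]

lemma wpow_succ (u : List A) (m : ℕ) : wpow u (m + 1) = u ++ wpow u m := by
  simp [wpow, List.replicate_succ]

lemma Polynomial.eventually_eval_lt_two_pow (P : Polynomial ℕ) :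
    ∀ᶠ m : ℕ in Filter.atTop, P.eval m < 2 ^ m := by
  set P' := P.map (Nat.castRingHom ℝ)
  have hP' : P'.eval =O[Filter.atTop] (Polynomial.X ^ P'.natDegree : Polynomial ℝ).eval :=
    Polynomial.isBigO_atTop_of_degree_le _ _ (by simp [Polynomial.degree_le_natDegree])
  have hlo : (fun m : ℕ ↦ P'.eval (m : ℝ)) =o[Filter.atTop] fun m ↦ (2 : ℝ) ^ m := by
    refine (hP'.comp_tendsto tendsto_natCast_atTop_atTop).trans_isLittleO ?_
    simpa [Function.comp_def] using isLittleO_pow_const_const_pow_of_one_lt P'.natDegree one_lt_two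
  filter_upwards [hlo.bound one_half_pos] with m hm
  have hm' : ((P.eval m : ℕ) : ℝ) ≤ 1 / 2 * 2 ^ m := by simpa [P'] using hm
  have : (1 / 2 : ℝ) * 2 ^ m < 2 ^ m := by linarith [pow_pos (two_pos : (0 : ℝ) < 2) m]
  exact_mod_cast hm'.trans_lt this

/-- Encodes a list of length at most `n` whose first components are at most `L` as a function
on a finite type, so that such lists can be counted. -/
def finCode {X : Type*} (n L : ℕ) (l : List (ℕ × X)) : Fin n → Option (Fin (L + 1) × X) :=
  fun k ↦ l[k.val]?.map fun e ↦ (Fin.ofNat (L + 1) e.1, e.2)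

lemma finCode_injOn {X : Type*} (n L : ℕ) :
    Set.InjOn (finCode (X := X) n L) {l | l.length ≤ n ∧ ∀ e ∈ l, e.1 ≤ L} := by
  rintro l₁ ⟨hn₁, hL₁⟩ l₂ ⟨hn₂, hL₂⟩ hc
  refine List.ext_getElem? fun k ↦ ?_
  by_cases hk : k < n
  · have hck := congrFun hc ⟨k, hk⟩
    rcases h₁ : l₁[k]? with _ | e₁ <;> rcases h₂ : l₂[k]? with _ | e₂ <;>
      simp only [finCode, h₁, h₂, Option.map_none, Option.map_some, reduceCtorEq,
        Option.some.injEq, Prod.mk.injEq] at hck ⊢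
    have hv := congrArg Fin.val hck.1
    rw [Fin.val_ofNat, Fin.val_ofNat,
      Nat.mod_eq_of_lt (Nat.lt_succ_of_le (hL₁ e₁ (List.mem_of_getElem? h₁))),
      Nat.mod_eq_of_lt (Nat.lt_succ_of_le (hL₂ e₂ (List.mem_of_getElem? h₂)))] at hv
    exact Prod.ext hv hck.2
  · rw [List.getElem?_eq_none (by omega), List.getElem?_eq_none (by omega)]

namespace RunFrom

variable {Δ : Q → A → Q → Prop} {p q : Q} {a : A} {u v w : List A} {ρ ρ₁ ρ₂ : List Q}

@[simp] lemma nil_iff : RunFrom Δ p [] ρ ↔ ρ = [] := by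
  cases ρ <;> simp [RunFrom]

lemma cons_iff : RunFrom Δ p (a :: w) ρ ↔ ∃ q ρ', ρ = q :: ρ' ∧ Δ p a q ∧ RunFrom Δ q w ρ' := by
  cases ρ <;> simp [RunFrom]

lemma length_eq (h : RunFrom Δ p w ρ) : ρ.length = w.length := by
  induction w generalizing p ρ with
  | nil => simp_all
  | cons a w ih =>
    obtain ⟨q, ρ', rfl, -, h⟩ := cons_iff.1 h
    simp [ih h]

lemma append (h₁ : RunFrom Δ p u ρ₁) (h₂ : RunFrom Δ (ρ₁.getLastD p) v ρ₂) :
    RunFrom Δ p (u ++ v) (ρ₁ ++ ρ₂) := by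
  induction u generalizing p ρ₁ with
  | nil => simp_all
  | cons a u ih =>
    obtain ⟨q, ρ', rfl, hpq, h₁⟩ := cons_iff.1 h₁
    rw [List.getLastD_cons] at h₂
    exact ⟨hpq, ih h₁ h₂⟩

lemma of_append (h : RunFrom Δ p w (ρ₁ ++ ρ₂)) :
    RunFrom Δ p (w.take ρ₁.length) ρ₁ ∧ RunFrom Δ (ρ₁.getLastD p) (w.drop ρ₁.length) ρ₂ := by
  induction ρ₁ generalizing p w with
  | nil => simpa [RunFrom] using h
  | cons q ρ₁ ih =>
    cases w with
    | nil => simp at h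
    | cons a w =>
      obtain ⟨hpq, h⟩ := h
      rw [List.getLastD_cons]
      exact ⟨⟨hpq, (ih h).1⟩, (ih h).2⟩

lemma exists_hasRun_of_mem (h : RunFrom Δ p w ρ) (hq : q ∈ p :: ρ) :
    ∃ w₁ w₂, HasRun Δ p w₁ q ∧ HasRun Δ q w₂ (ρ.getLastD p) := by
  rcases List.mem_cons.1 hq with rfl | hq
  · exact ⟨[], w, ⟨[], trivial, rfl⟩, ⟨ρ, h, List.getLast_eq_getLastD _⟩⟩
  obtain ⟨ρ₁, ρ₂, rfl⟩ := List.append_of_mem hq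
  rw [← List.singleton_append, ← List.append_assoc] at h ⊢
  obtain ⟨h₁, h₂⟩ := h.of_append
  rw [List.getLastD_concat] at h₂
  exact ⟨_, _, ⟨_, h₁, by rw [List.getLast_eq_getLastD, List.getLastD_concat]⟩,
    ⟨_, h₂, by rw [List.getLast_eq_getLastD, List.getLastD_append, List.getLastD_concat]⟩⟩

end RunFrom

section SCC

variable {Δ : Q → A → Q → Prop} {p q r : Q} {a : A} {u v w : List A}

lemma hasRun_iff : HasRun Δ p w q ↔ ∃ ρ, RunFrom Δ p w ρ ∧ ρ.getLastD p = q := by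
  simp only [HasRun, List.getLast_eq_getLastD]

lemma HasRun.trans (h₁ : HasRun Δ p u q) (h₂ : HasRun Δ q v r) : HasRun Δ p (u ++ v) r := by
  obtain ⟨ρ₁, hρ₁, rfl⟩ := hasRun_iff.1 h₁
  obtain ⟨ρ₂, hρ₂, rfl⟩ := hasRun_iff.1 h₂
  exact hasRun_iff.2 ⟨ρ₁ ++ ρ₂, hρ₁.append hρ₂, List.getLastD_append _ _ _⟩

lemma HasRun.eq_of_nil (h : HasRun Δ p [] q) : p = q := by
  obtain ⟨ρ, h, rfl⟩ := hasRun_iff.1 h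
  simp_all

lemma hasRun_singleton (h : Δ p a q) : HasRun Δ p [a] q := ⟨[q], ⟨h, trivial⟩, rfl⟩

lemma SameSCC.refl (p : Q) : SameSCC Δ p p := Or.inl rfl

lemma SameSCC.trans (h₁ : SameSCC Δ p q) (h₂ : SameSCC Δ q r) : SameSCC Δ p r := by
  rcases h₁ with rfl | ⟨⟨u, hu, hpq⟩, ⟨v, hv, hqp⟩⟩
  · exact h₂
  rcases h₂ with rfl | ⟨⟨u', -, hqr⟩, ⟨v', hv', hrq⟩⟩
  · exact Or.inr ⟨⟨u, hu, hpq⟩, ⟨v, hv, hqp⟩⟩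
  · exact Or.inr ⟨⟨u ++ u', by simp [hu], hpq.trans hqr⟩, ⟨v' ++ v, by simp [hv'], hrq.trans hqp⟩⟩

lemma sameSCC_of_step_of_hasRun (hpq : Δ p a q) (hqp : HasRun Δ q u p) : SameSCC Δ p q := by
  by_cases hu : u = []
  · exact Or.inl (hu ▸ hqp).eq_of_nil.symm
  · exact Or.inr ⟨⟨[a], List.cons_ne_nil _ _, hasRun_singleton hpq⟩, ⟨u, hu, hqp⟩⟩

lemma SCCUnambiguous.runFrom_eq (hU : SCCUnambiguous Δ) {ρ₁ ρ₂ : List Q}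
    (h₁ : RunFrom Δ p w ρ₁) (h₂ : RunFrom Δ p w ρ₂) (hs : SameSCC Δ p (ρ₁.getLastD p))
    (he : ρ₁.getLastD p = ρ₂.getLastD p) : ρ₁ = ρ₂ := by
  by_cases hw : w = []
  · subst hw
    simp_all
  · exact hU _ _ hs w ρ₁ ρ₂ hw h₁ h₂ (List.getLast_eq_getLastD _)
      (by rw [List.getLast_eq_getLastD, he])

end SCC

open Classical in
/-- The transitions of a run that leave an SCC, as triples (position, source, target), with
positions counted from `i`. -/
noncomputable def breaks (Δ : Q → A → Q → Prop) : ℕ → Q → List Q → List (ℕ × Q × Q)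
  | _, _, [] => []
  | i, p, q :: ρ =>
    if SameSCC Δ p q then breaks Δ (i + 1) q ρ else (i, p, q) :: breaks Δ (i + 1) q ρ

section Breaks

variable {Δ : Q → A → Q → Prop}

lemma fst_mem_Ico_of_mem_breaks {i : ℕ} {p : Q} {ρ : List Q} {e : ℕ × Q × Q}
    (he : e ∈ breaks Δ i p ρ) : e.1 ∈ Set.Ico i (i + ρ.length) := by
  induction ρ generalizing i p with
  | nil => simp [breaks] at he
  | cons q ρ ih =>
    unfold breaks at he
    split_ifs at he
    · have := ih he
      simp only [Set.mem_Ico, List.length_cons] at this ⊢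
      omega
    · rcases List.mem_cons.1 he with rfl | he
      · simp
      · have := ih he
        simp only [Set.mem_Ico, List.length_cons] at this ⊢
        omega

-- SCC-unambiguity only constrains whole runs between two states of one SCC, so the part `π`
-- of the current SCC already read has to be carried along.
lemma SCCUnambiguous.append_eq_of_breaks_eq (hU : SCCUnambiguous Δ) {i : ℕ} {p₀ p₁ p₂ : Q}
    {v w : List A} {π₁ π₂ ρ₁ ρ₂ : List Q}
    (hπ₁ : RunFrom Δ p₀ v π₁) (hπ₂ : RunFrom Δ p₀ v π₂)
    (he₁ : π₁.getLastD p₀ = p₁) (he₂ : π₂.getLastD p₀ = p₂)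
    (hs₁ : SameSCC Δ p₀ p₁) (hs₂ : SameSCC Δ p₀ p₂)
    (h₁ : RunFrom Δ p₁ w ρ₁) (h₂ : RunFrom Δ p₂ w ρ₂)
    (hb : breaks Δ i p₁ ρ₁ = breaks Δ i p₂ ρ₂) (he : ρ₁.getLastD p₁ = ρ₂.getLastD p₂) :
    π₁ ++ ρ₁ = π₂ ++ ρ₂ := by
  induction w generalizing i p₀ p₁ p₂ v π₁ π₂ ρ₁ ρ₂ with
  | nil =>
    obtain rfl := RunFrom.nil_iff.1 h₁
    obtain rfl := RunFrom.nil_iff.1 h₂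
    subst he₁ he₂
    simpa using hU.runFrom_eq hπ₁ hπ₂ hs₁ he
  | cons a w ih =>
    obtain ⟨q₁, ρ₁, rfl, hpq₁, hρ₁⟩ := RunFrom.cons_iff.1 h₁
    obtain ⟨q₂, ρ₂, rfl, hpq₂, hρ₂⟩ := RunFrom.cons_iff.1 h₂
    rw [List.getLastD_cons, List.getLastD_cons] at he
    have extend {π : List Q} {p q : Q} (hπ : RunFrom Δ p₀ v π) (he : π.getLastD p₀ = p)
        (hpq : Δ p a q) : RunFrom Δ p₀ (v ++ [a]) (π ++ [q]) :=
      hπ.append (he ▸ ⟨hpq, trivial⟩)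
    by_cases hs₁' : SameSCC Δ p₁ q₁ <;> by_cases hs₂' : SameSCC Δ p₂ q₂ <;>
      simp only [breaks, hs₁', hs₂', if_true, if_false] at hb
    · simpa using ih (extend hπ₁ he₁ hpq₁) (extend hπ₂ he₂ hpq₂) List.getLastD_concat
        List.getLastD_concat (hs₁.trans hs₁') (hs₂.trans hs₂') hρ₁ hρ₂ hb he
    · obtain ⟨hi, -⟩ := fst_mem_Ico_of_mem_breaks (hb ▸ List.mem_cons_self)
      omega
    · obtain ⟨hi, -⟩ := fst_mem_Ico_of_mem_breaks (hb ▸ List.mem_cons_self)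
      omega
    · simp only [List.cons.injEq, Prod.mk.injEq, true_and] at hb
      obtain ⟨⟨rfl, rfl⟩, hb⟩ := hb
      have hπ : π₁ = π₂ := hU.runFrom_eq hπ₁ hπ₂ (he₁ ▸ hs₁) (he₁.trans he₂.symm)
      have hρ := ih (v := []) (π₁ := []) (π₂ := []) (p₀ := q₁) trivial trivial rfl rfl
        (.refl _) (.refl _) hρ₁ hρ₂ hb he
      simp_all

lemma hasRun_of_mem_breaks {i : ℕ} {p : Q} {w : List A} {ρ : List Q} {e : ℕ × Q × Q}
    (h : RunFrom Δ p w ρ) (he : e ∈ breaks Δ i p ρ) : ∃ u, HasRun Δ p u e.2.1 := by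
  induction w generalizing i p ρ with
  | nil => simp_all [breaks]
  | cons a w ih =>
    obtain ⟨q, ρ, rfl, hpq, hρ⟩ := RunFrom.cons_iff.1 h
    have from_q : e ∈ breaks Δ (i + 1) q ρ → ∃ u, HasRun Δ p u e.2.1 := fun he ↦
      let ⟨u, hu⟩ := ih hρ he
      ⟨a :: u, (hasRun_singleton hpq).trans hu⟩
    unfold breaks at he
    split_ifs at he
    · exact from_q he
    · rcases List.mem_cons.1 he with rfl | he
      · exact ⟨[], ⟨[], trivial, rfl⟩⟩
      · exact from_q he

lemma nodup_map_breaks {i : ℕ} {p : Q} {w : List A} {ρ : List Q} (h : RunFrom Δ p w ρ) :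
    ((breaks Δ i p ρ).map fun e ↦ e.2.1).Nodup := by
  induction w generalizing i p ρ with
  | nil => simp_all [breaks]
  | cons a w ih =>
    obtain ⟨q, ρ, rfl, hpq, hρ⟩ := RunFrom.cons_iff.1 h
    unfold breaks
    split_ifs with hs
    · exact ih hρ
    · refine List.nodup_cons.2 ⟨?_, ih hρ⟩
      simp only [List.mem_map]
      rintro ⟨e, he, hep⟩
      obtain ⟨u, hu⟩ := hasRun_of_mem_breaks hρ he
      exact hs (sameSCC_of_step_of_hasRun hpq (hep ▸ hu))

lemma length_breaks_le_card [Fintype Q] {i : ℕ} {p : Q} {w : List A} {ρ : List Q}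
    (h : RunFrom Δ p w ρ) : (breaks Δ i p ρ).length ≤ Fintype.card Q := by
  simpa using (nodup_map_breaks h).length_le_card

end Breaks

theorem SCCUnambiguous.ncard_accRuns_le [Fintype Q] {Δ : Q → A → Q → Prop}
    (hU : SCCUnambiguous Δ) (I F : Set Q) (w : List A) :
    (AccRuns Δ I F w).ncard ≤ Fintype.card Q * Fintype.card Q *
      (Fintype.card Q * Fintype.card Q * (w.length + 1) + 1) ^ Fintype.card Q := by
  let code (x : Q × List Q) :
      Q × Q × (Fin (Fintype.card Q) → Option (Fin (w.length + 1) × Q × Q)) :=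
    (x.1, x.2.getLastD x.1, finCode _ _ (breaks Δ 0 x.1 x.2))
  have breaks_mem {p : Q} {ρ : List Q} (h : RunFrom Δ p w ρ) :
      breaks Δ 0 p ρ ∈ {l | l.length ≤ Fintype.card Q ∧ ∀ e ∈ l, e.1 ≤ w.length} := by
    refine ⟨length_breaks_le_card h, fun e he ↦ ?_⟩
    obtain ⟨-, hlt⟩ := fst_mem_Ico_of_mem_breaks he
    rw [h.length_eq] at hlt
    omega
  have hinj : Set.InjOn code (AccRuns Δ I F w) := by
    rintro ⟨p, ρ₁⟩ ⟨-, h₁, -⟩ ⟨p', ρ₂⟩ ⟨-, h₂, -⟩ hc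
    simp only [code, Prod.mk.injEq] at hc
    obtain ⟨rfl, he, hc⟩ := hc
    have hb := finCode_injOn _ _ (breaks_mem h₁) (breaks_mem h₂) hc
    simpa using hU.append_eq_of_breaks_eq (v := []) (π₁ := []) (π₂ := []) trivial trivial rfl rfl
      (.refl p) (.refl p) h₁ h₂ hb he
  calc (AccRuns Δ I F w).ncard = (code '' AccRuns Δ I F w).ncard := hinj.ncard_image.symm
    _ ≤ Nat.card (Q × Q × (Fin (Fintype.card Q) → Option (Fin (w.length + 1) × Q × Q))) :=
      Set.ncard_le_card _
    _ = _ := by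
      simp only [Nat.card_eq_fintype_card, Fintype.card_prod, Fintype.card_pi,
        Fintype.card_option, Fintype.card_fin, Finset.prod_const, Finset.card_univ]
      ring

section Pumping

variable {Δ : Q → A → Q → Prop}

lemma finite_accRuns [Finite Q] (I F : Set Q) (w : List A) : (AccRuns Δ I F w).Finite :=
  (Set.finite_univ.prod (List.finite_length_eq Q w.length)).subset fun _ hx ↦
    ⟨trivial, hx.2.1.length_eq⟩

lemma exists_ne_loops_of_not_sccUnambiguous (h : ¬ SCCUnambiguous Δ) :
    ∃ p s ρ₁ ρ₂, s ≠ [] ∧ RunFrom Δ p s ρ₁ ∧ ρ₁.getLastD p = p ∧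
      RunFrom Δ p s ρ₂ ∧ ρ₂.getLastD p = p ∧ ρ₁ ≠ ρ₂ := by
  simp only [SCCUnambiguous, UnambFromTo, List.getLast_eq_getLastD] at h
  push Not at h
  obtain ⟨p, q, hpq, u, ρ₁, ρ₂, hu, h₁, h₂, rfl, he, hne⟩ := h
  rcases hpq with hpq | ⟨-, v, -, hv⟩
  · exact ⟨p, u, ρ₁, ρ₂, hu, h₁, hpq.symm, h₂, he.trans hpq.symm, hne⟩
  obtain ⟨σ, hσ, hσe⟩ := hasRun_iff.1 hv
  refine ⟨p, u ++ v, ρ₁ ++ σ, ρ₂ ++ σ, by simp [hu], h₁.append hσ,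
    by rw [List.getLastD_append, hσe], h₂.append (by rwa [he]),
    by rw [List.getLastD_append, he, hσe], fun h ↦ hne (List.append_cancel_right h)⟩

lemma runFrom_flatMap_loops {β : Type*} {p : Q} {s : List A} {g : β → List Q}
    (hg : ∀ b, RunFrom Δ p s (g b) ∧ (g b).getLastD p = p) :
    ∀ cs : List β,
      RunFrom Δ p (wpow s cs.length) (cs.flatMap g) ∧ (cs.flatMap g).getLastD p = p
  | [] => ⟨trivial, rfl⟩
  | b :: cs => by
    obtain ⟨h, he⟩ := runFrom_flatMap_loops hg cs
    rw [List.length_cons, wpow_succ, List.flatMap_cons, List.getLastD_append, (hg b).2]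
    exact ⟨(hg b).1.append (by rwa [(hg b).2]), he⟩

lemma two_pow_le_ncard_accRuns [Finite Q] {I F : Set Q} {p₀ p f : Q} {w₁ w₂ s : List A}
    {ρ₁ ρ₂ : List Q} (hI : p₀ ∈ I) (hF : f ∈ F) (hw₁ : HasRun Δ p₀ w₁ p) (hw₂ : HasRun Δ p w₂ f)
    (h₁ : RunFrom Δ p s ρ₁) (he₁ : ρ₁.getLastD p = p)
    (h₂ : RunFrom Δ p s ρ₂) (he₂ : ρ₂.getLastD p = p) (hne : ρ₁ ≠ ρ₂) (m : ℕ) :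
    2 ^ m ≤ (AccRuns Δ I F (w₁ ++ (wpow s m ++ w₂))).ncard := by
  obtain ⟨π₁, hπ₁, hπ₁e⟩ := hasRun_iff.1 hw₁
  obtain ⟨π₂, hπ₂, hπ₂e⟩ := hasRun_iff.1 hw₂
  let g (b : Bool) : List Q := bif b then ρ₁ else ρ₂
  have hg : Function.Injective g := by
    intro b b'
    cases b <;> cases b' <;> simp [g, hne, hne.symm]
  have hloop (b : Bool) : RunFrom Δ p s (g b) ∧ (g b).getLastD p = p := by
    cases b
    exacts [⟨h₂, he₂⟩, ⟨h₁, he₁⟩]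
  let run (c : Fin m → Bool) : Q × List Q := (p₀, π₁ ++ ((List.ofFn c).flatMap g ++ π₂))
  have hmem (c : Fin m → Bool) : run c ∈ AccRuns Δ I F (w₁ ++ (wpow s m ++ w₂)) := by
    obtain ⟨hc, hce⟩ := runFrom_flatMap_loops hloop (List.ofFn c)
    rw [List.length_ofFn] at hc
    refine ⟨hI, hπ₁.append (hπ₁e ▸ hc.append (by rwa [hce])), ?_⟩
    rw [List.getLast_eq_getLastD, List.getLastD_append, List.getLastD_append, hπ₁e, hce, hπ₂e]
    exact hF
  have hinj : Set.InjOn run Set.univ := by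
    intro c _ c' _ h
    simp only [run, Prod.mk.injEq, List.append_cancel_left_eq, List.append_cancel_right_eq,
      true_and] at h
    have hlen : ∀ b b', (g b).length = (g b').length := fun b b' ↦ by
      rw [(hloop b).1.length_eq, (hloop b').1.length_eq]
    exact List.ofFn_injective (List.flatMap_inj_of_length_eq hg hlen (by simp) h)
  calc 2 ^ m = (Set.univ : Set (Fin m → Bool)).ncard := by simp [Set.ncard_univ]
    _ ≤ _ := Set.ncard_le_ncard_of_injOn run (fun c _ ↦ hmem c) hinj (finite_accRuns I F _)

end Pumping

theorem sccUnambiguous_of_ncard_accRuns_le_eval [Finite Q] {Δ : Q → A → Q → Prop} {I F : Set Q}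
    (htrim : ∀ q : Q, ∃ (w : List A) (x : Q × List Q), x ∈ AccRuns Δ I F w ∧ q ∈ x.1 :: x.2)
    (P : Polynomial ℕ) (hP : ∀ w : List A, w ≠ [] → (AccRuns Δ I F w).ncard ≤ P.eval w.length) :
    SCCUnambiguous Δ := by
  by_contra hU
  obtain ⟨p, s, ρ₁, ρ₂, hs, h₁, he₁, h₂, he₂, hne⟩ := exists_ne_loops_of_not_sccUnambiguous hU
  obtain ⟨w, x, ⟨hI, hx, hF⟩, hp⟩ := htrim p
  obtain ⟨w₁, w₂, hw₁, hw₂⟩ := RunFrom.exists_hasRun_of_mem hx hp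
  rw [List.getLast_eq_getLastD] at hF
  let R := P.comp (.C s.length * .X + .C (w₁.length + w₂.length))
  obtain ⟨m, hlt, hm⟩ := (R.eventually_eval_lt_two_pow.and (Filter.eventually_ge_atTop 1)).exists
  have hlen : (w₁ ++ (wpow s m ++ w₂)).length = s.length * m + (w₁.length + w₂.length) := by
    simp only [List.length_append, length_wpow]
    ring
  have hw : w₁ ++ (wpow s m ++ w₂) ≠ [] := by
    rw [← List.length_pos_iff, hlen]
    have := List.length_pos_iff.2 hs
    positivity
  have hle := (two_pow_le_ncard_accRuns hI hF hw₁ hw₂ h₁ he₁ h₂ he₂ hne m).trans (hP _ hw)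
  simp only [R, Polynomial.eval_comp, Polynomial.eval_add, Polynomial.eval_mul,
    Polynomial.eval_C, Polynomial.eval_X, hlen] at hlt hle
  omega

/-- A trimmed nondeterministic automaton is polynomially ambiguous iff it is
SCC-unambiguous. -/
theorem polyAmbiguous_iff_sccUnambiguous [Fintype Q] (Δ : Q → A → Q → Prop)
    (I F : Set Q)
    (htrim : ∀ q : Q, ∃ (w : List A) (x : Q × List Q),
      x ∈ AccRuns Δ I F w ∧ q ∈ x.1 :: x.2) :
    (∃ P : Polynomial ℕ, ∀ w : List A, w ≠ [] →
        (AccRuns Δ I F w).ncard ≤ P.eval w.length) ↔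
      SCCUnambiguous Δ := by
  refine ⟨fun ⟨P, hP⟩ ↦ sccUnambiguous_of_ncard_accRuns_le_eval htrim P hP, fun hU ↦ ?_⟩
  let n := Fintype.card Q
  refine ⟨.C (n * n) * (.C (n * n) * (.X + 1) + 1) ^ n, fun w _ ↦ ?_⟩
  simpa [n] using hU.ncard_accRuns_le I F w
end

section
/- Let A be a nondeterministic automaton with n states. For each word w ∈ Σ⁺ and each k ≥ 1, the number of runs in the 'k-tuple automaton' A_{≥k} on w from its initial state to its final states equals the number of strictly increasing (in lexicographic order on state sequences) k-tuples (ρ¹ ≺ ρ² ≺ ⋯ ≺ ρᵏ) of accepting runs of A on w. In particular, A_{≥k} accepts exactly the words admitting at least k accepting runs in A. -/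
variable {Q Q' A R : Type*}

/-- Transition relation of the automaton `A_{≥k}` tracking `k` lexicographically
ordered runs of `A` together with difference bits. -/
def AkTrans (Δ : Q → A → Q → Prop) (lt : Q → Q → Prop) (k : ℕ) :
    ((Fin k → Q) × (Fin (k - 1) → Bool)) → A → ((Fin k → Q) × (Fin (k - 1) → Bool)) → Prop :=
  fun x a y =>
    (∀ ℓ : Fin k, Δ (x.1 ℓ) a (y.1 ℓ)) ∧
    ∀ ℓ : Fin (k - 1),
      (x.2 ℓ = false ∧
        y.1 ⟨ℓ.val, by have := ℓ.isLt; omega⟩ = y.1 ⟨ℓ.val + 1, by have := ℓ.isLt; omega⟩ ∧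
        y.2 ℓ = false) ∨
      ((x.2 ℓ = true ∨
          lt (y.1 ⟨ℓ.val, by have := ℓ.isLt; omega⟩) (y.1 ⟨ℓ.val + 1, by have := ℓ.isLt; omega⟩)) ∧
        y.2 ℓ = true)

/-- The initial state of `A_{≥k}`. -/
def AkInit (q₀ : Q) (k : ℕ) : (Fin k → Q) × (Fin (k - 1) → Bool) :=
  (fun _ => q₀, fun _ => false)

/-- The set of final states of `A_{≥k}`. -/
def AkFinal (F : Set Q) (k : ℕ) : Set ((Fin k → Q) × (Fin (k - 1) → Bool)) :=
  {x | (∀ ℓ, x.1 ℓ ∈ F) ∧ ∀ ℓ, x.2 ℓ = true}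

/-! A run of `A_{≥k}` is determined by its `k` tracks, each a run of `A`: bit `ℓ` records whether
tracks `ℓ` and `ℓ + 1` have diverged yet, and the transition rule forces their first divergence to
go upward in `≺`, so track `ℓ` is lexicographically at most track `ℓ + 1`. Final bits all `1` say
that adjacent tracks differ, hence projecting onto the tracks is a bijection onto the strictly
increasing `k`-tuples of accepting runs. Such a tuple exists iff there are at least `k` accepting
runs, as the lexicographic order is a strict total order on the finitely many runs on `w`. -/

section Runs

variable {Δ : Q → A → Q → Prop}

theorem runFrom_nil_iff {p : Q} {ρ : List Q} : RunFrom Δ p [] ρ ↔ ρ = [] := by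
  cases ρ <;> simp [RunFrom]

theorem runFrom_cons_iff {p : Q} {a : A} {w : List A} {ρ : List Q} :
    RunFrom Δ p (a :: w) ρ ↔ ∃ q ρ', ρ = q :: ρ' ∧ Δ p a q ∧ RunFrom Δ q w ρ' := by
  cases ρ <;> simp [RunFrom]

theorem RunFrom.length_eq_s5 {p : Q} {w : List A} {ρ : List Q} (h : RunFrom Δ p w ρ) :
    ρ.length = w.length := by
  induction w generalizing p ρ with
  | nil => simp [runFrom_nil_iff.1 h]
  | cons a w ih =>
    obtain ⟨q, ρ', rfl, -, h⟩ := runFrom_cons_iff.1 h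
    simp [ih h]

theorem finite_setOf_runFrom [Finite Q] (p : Q) (w : List A) :
    {ρ | RunFrom Δ p w ρ}.Finite :=
  (List.finite_length_eq Q w.length).subset fun _ h => RunFrom.length_eq_s5 h

end Runs

namespace Fin

def adjFst {k : ℕ} (ℓ : Fin (k - 1)) : Fin k := ⟨ℓ, by omega⟩

def adjSnd {k : ℕ} (ℓ : Fin (k - 1)) : Fin k := ⟨ℓ + 1, by omega⟩

theorem strictMono_iff_adj {α : Type*} [Preorder α] :
    ∀ {k : ℕ} {f : Fin k → α}, StrictMono f ↔ ∀ ℓ : Fin (k - 1), f ℓ.adjFst < f ℓ.adjSnd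
  | 0, _ => ⟨fun _ ℓ => ℓ.elim0, fun _ i => i.elim0⟩
  | _ + 1, _ => strictMono_iff_lt_succ

end Fin

instance List.Lex.isStrictTotalOrder {α : Type*} {r : α → α → Prop} [IsStrictTotalOrder α r] :
    IsStrictTotalOrder (List α) (List.Lex r) :=
  { isStrictWeakOrder_of_isOrderConnected with }

theorem Set.Finite.le_ncard_iff_exists_strictMono {α : Type*} [LinearOrder α] {s : Set α}
    (hs : s.Finite) {k : ℕ} : k ≤ s.ncard ↔ ∃ f : Fin k → α, StrictMono f ∧ ∀ i, f i ∈ s := by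
  constructor
  · intro hk
    obtain ⟨t, hts, htk⟩ := Set.exists_subset_card_eq hk
    have ht : t.Finite := hs.subset hts
    let e := ht.toFinset.orderEmbOfFin ((Set.ncard_eq_toFinset_card t ht).symm.trans htk)
    exact ⟨e, e.strictMono, fun i => hts (ht.mem_toFinset.1 (Finset.orderEmbOfFin_mem _ _ i))⟩
  · rintro ⟨f, hf, hfs⟩
    calc k = (Set.range f).ncard := by rw [Set.ncard_range_of_injective hf.injective, Nat.card_fin]
      _ ≤ s.ncard := Set.ncard_le_ncard (Set.range_subset_iff.2 hfs) hs

theorem Set.Finite.le_ncard_iff_exists_chain {α : Type*} {r : α → α → Prop}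
    [IsStrictTotalOrder α r] {s : Set α} (hs : s.Finite) {k : ℕ} :
    k ≤ s.ncard ↔
      ∃ f : Fin k → α, (∀ ℓ : Fin (k - 1), r (f ℓ.adjFst) (f ℓ.adjSnd)) ∧ ∀ i, f i ∈ s := by
  classical
  let _ := linearOrderOfSTO r
  rw [hs.le_ncard_iff_exists_strictMono]
  exact exists_congr fun f => and_congr_left' (Fin.strictMono_iff_adj (f := f))

section AkAutomaton

variable {α : Type*} {k : ℕ}

def AdjOrdered (R : α → α → Prop) (b : Fin (k - 1) → Bool) (f : Fin k → α) : Prop :=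
  ∀ ℓ, b ℓ = true ∨ f ℓ.adjFst = f ℓ.adjSnd ∨ R (f ℓ.adjFst) (f ℓ.adjSnd)

def flagDiffs [DecidableEq α] (b : Fin (k - 1) → Bool) (f : Fin k → α) : Fin (k - 1) → Bool :=
  fun ℓ => b ℓ || decide (f ℓ.adjFst ≠ f ℓ.adjSnd)

theorem flagDiffs_flagDiffs_cons [DecidableEq α] (b : Fin (k - 1) → Bool) (q : Fin k → α)
    (r : Fin k → List α) :
    flagDiffs (flagDiffs b q) r = flagDiffs b (fun ℓ => q ℓ :: r ℓ) := by
  funext ℓ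
  simp only [flagDiffs, ne_eq, List.cons.injEq, not_and_or, Bool.or_assoc, Bool.decide_or]

theorem adjOrdered_cons_iff {R : α → α → Prop} [Std.Irrefl R] [DecidableEq α]
    {b : Fin (k - 1) → Bool} {q : Fin k → α} {r : Fin k → List α} :
    AdjOrdered (List.Lex R) b (fun ℓ => q ℓ :: r ℓ) ↔
      AdjOrdered R b q ∧ AdjOrdered (List.Lex R) (flagDiffs b q) r := by
  simp only [AdjOrdered, ← forall_and]
  refine forall_congr' fun ℓ => ?_
  by_cases h : q ℓ.adjFst = q ℓ.adjSnd
  · simp [flagDiffs, h, List.lex_cons_iff, irrefl]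
  · simp [flagDiffs, h, List.cons_lex_cons_iff]

variable {Δ : Q → A → Q → Prop} {lt : Q → Q → Prop}

def tracks (ρ : List ((Fin k → Q) × (Fin (k - 1) → Bool))) (ℓ : Fin k) : List Q :=
  ρ.map (·.1 ℓ)

theorem tracks_cons (s : (Fin k → Q) × (Fin (k - 1) → Bool)) (ρ) :
    tracks (s :: ρ) = fun ℓ => s.1 ℓ :: tracks ρ ℓ := rfl

theorem getLast_cons_tracks (x : (Fin k → Q) × (Fin (k - 1) → Bool)) (ρ) (ℓ : Fin k) :
    (x.1 ℓ :: tracks ρ ℓ).getLast (List.cons_ne_nil _ _) =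
      ((x :: ρ).getLast (List.cons_ne_nil _ _)).1 ℓ :=
  List.getLast_map (f := fun s : (Fin k → Q) × (Fin (k - 1) → Bool) => s.1 ℓ) (l := x :: ρ) _

theorem akTrans_iff [Std.Irrefl lt] [DecidableEq Q] {x y : (Fin k → Q) × (Fin (k - 1) → Bool)}
    {a : A} :
    AkTrans Δ lt k x a y ↔
      (∀ ℓ, Δ (x.1 ℓ) a (y.1 ℓ)) ∧ AdjOrdered lt x.2 y.1 ∧ y.2 = flagDiffs x.2 y.1 := by
  have bit_iff : ∀ (b c : Bool) (u v : Q),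
      (b = false ∧ u = v ∧ c = false ∨ (b = true ∨ lt u v) ∧ c = true) ↔
        (b = true ∨ u = v ∨ lt u v) ∧ c = (b || decide (u ≠ v)) := by
    intro b c u v
    by_cases h : u = v <;> cases b <;> cases c <;> simp [h, irrefl]
  simp only [AkTrans, AdjOrdered, flagDiffs, funext_iff, ← forall_and]
  exact and_congr_right fun _ => forall_congr' fun ℓ => bit_iff _ _ _ _

variable {x : (Fin k → Q) × (Fin (k - 1) → Bool)} {w : List A}

theorem RunFrom.runFrom_tracks {ρ} (h : RunFrom (AkTrans Δ lt k) x w ρ) (ℓ : Fin k) :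
    RunFrom Δ (x.1 ℓ) w (tracks ρ ℓ) := by
  induction w generalizing x ρ with
  | nil => rw [runFrom_nil_iff.1 h]; trivial
  | cons a w ih =>
    obtain ⟨y, ρ, rfl, hxy, h⟩ := runFrom_cons_iff.1 h
    exact ⟨hxy.1 ℓ, ih h⟩

variable [Std.Irrefl lt] [DecidableEq Q]

theorem RunFrom.adjOrdered_tracks {ρ} (h : RunFrom (AkTrans Δ lt k) x w ρ) :
    AdjOrdered (List.Lex lt) x.2 (tracks ρ) := by
  induction w generalizing x ρ with
  | nil => rw [runFrom_nil_iff.1 h]; exact fun _ => Or.inr (Or.inl rfl)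
  | cons a w ih =>
    obtain ⟨y, ρ, rfl, hxy, h⟩ := runFrom_cons_iff.1 h
    obtain ⟨-, hord, hy⟩ := akTrans_iff.1 hxy
    rw [tracks_cons]
    exact adjOrdered_cons_iff.2 ⟨hord, hy ▸ ih h⟩

theorem RunFrom.getLast_snd {ρ} (h : RunFrom (AkTrans Δ lt k) x w ρ) :
    ((x :: ρ).getLast (List.cons_ne_nil _ _)).2 = flagDiffs x.2 (tracks ρ) := by
  induction w generalizing x ρ with
  | nil => rw [runFrom_nil_iff.1 h]; funext ℓ; simp [flagDiffs, tracks]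
  | cons a w ih =>
    obtain ⟨y, ρ, rfl, hxy, h⟩ := runFrom_cons_iff.1 h
    obtain ⟨-, -, hy⟩ := akTrans_iff.1 hxy
    rw [List.getLast_cons (List.cons_ne_nil _ _), ih h, hy, tracks_cons, flagDiffs_flagDiffs_cons]

theorem injOn_tracks (x : (Fin k → Q) × (Fin (k - 1) → Bool)) (w : List A) :
    Set.InjOn tracks {ρ | RunFrom (AkTrans Δ lt k) x w ρ} := by
  intro ρ₁ h₁ ρ₂ h₂ he
  induction w generalizing x ρ₁ ρ₂ with
  | nil => rw [runFrom_nil_iff.1 h₁, runFrom_nil_iff.1 h₂]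
  | cons a w ih =>
    obtain ⟨y₁, ρ₁, rfl, hxy₁, h₁⟩ := runFrom_cons_iff.1 h₁
    obtain ⟨y₂, ρ₂, rfl, hxy₂, h₂⟩ := runFrom_cons_iff.1 h₂
    simp only [tracks_cons, funext_iff, List.cons.injEq, forall_and] at he
    have hy₁ : y₁.1 = y₂.1 := funext he.1
    have hy : y₁ = y₂ := Prod.ext hy₁ <| (akTrans_iff.1 hxy₁).2.2.trans <|
      hy₁ ▸ (akTrans_iff.1 hxy₂).2.2.symm
    subst hy
    rw [ih _ h₁ h₂ (funext he.2)]

theorem exists_runFrom_akTrans {r : Fin k → List Q} (hr : ∀ ℓ, RunFrom Δ (x.1 ℓ) w (r ℓ))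
    (ho : AdjOrdered (List.Lex lt) x.2 r) :
    ∃ ρ, RunFrom (AkTrans Δ lt k) x w ρ ∧ tracks ρ = r := by
  induction w generalizing x r with
  | nil => exact ⟨[], trivial, funext fun ℓ => (runFrom_nil_iff.1 (hr ℓ)).symm⟩
  | cons a w ih =>
    choose q r' hr_eq hΔ hr' using fun ℓ => runFrom_cons_iff.1 (hr ℓ)
    obtain rfl : r = fun ℓ => q ℓ :: r' ℓ := funext hr_eq
    obtain ⟨hq, ho'⟩ := adjOrdered_cons_iff.1 ho
    obtain ⟨ρ, hρ, rfl⟩ := ih (x := (q, flagDiffs x.2 q)) hr' ho'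
    exact ⟨(q, flagDiffs x.2 q) :: ρ, ⟨akTrans_iff.2 ⟨hΔ, hq, rfl⟩, hρ⟩, rfl⟩

theorem image_tracks_akAccepting (q₀ : Q) (F : Set Q) (w : List A) :
    tracks '' {ρ | RunFrom (AkTrans Δ lt k) (AkInit q₀ k) w ρ ∧
        (AkInit q₀ k :: ρ).getLast (List.cons_ne_nil _ _) ∈ AkFinal F k} =
      {r | (∀ ℓ, RunFrom Δ q₀ w (r ℓ) ∧ (q₀ :: r ℓ).getLast (List.cons_ne_nil _ _) ∈ F) ∧
        ∀ ℓ : Fin (k - 1), List.Lex lt (q₀ :: r ℓ.adjFst) (q₀ :: r ℓ.adjSnd)} := by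
  ext r
  constructor
  · rintro ⟨ρ, ⟨hρ, hstates, hbits⟩, rfl⟩
    refine ⟨fun ℓ => ⟨hρ.runFrom_tracks ℓ, getLast_cons_tracks (AkInit q₀ k) ρ ℓ ▸ hstates ℓ⟩,
      fun ℓ => List.Lex.cons ?_⟩
    have hne : tracks ρ ℓ.adjFst ≠ tracks ρ ℓ.adjSnd := by
      have := hbits ℓ
      rw [hρ.getLast_snd] at this
      simpa [flagDiffs, AkInit] using this
    simpa [AkInit, hne] using hρ.adjOrdered_tracks ℓ
  · rintro ⟨hacc, hlex⟩
    have hlex' ℓ := List.lex_cons_iff.1 (hlex ℓ)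
    obtain ⟨ρ, hρ, rfl⟩ := exists_runFrom_akTrans (x := AkInit q₀ k) (fun ℓ => (hacc ℓ).1)
      fun ℓ => Or.inr (Or.inr (hlex' ℓ))
    refine ⟨ρ, ⟨hρ, fun ℓ => getLast_cons_tracks (AkInit q₀ k) ρ ℓ ▸ (hacc ℓ).2, fun ℓ => ?_⟩, rfl⟩
    rw [hρ.getLast_snd]
    simpa [flagDiffs, AkInit] using
      List.Lex.to_ne (List.Lex.imp (fun _ _ => ne_of_irrefl) _ _ (hlex' ℓ))

end AkAutomaton

/-- The number of runs of `A_{≥k}` on `w` from its initial state to its final states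
equals the number of lexicographically strictly increasing `k`-tuples of accepting runs
of `A` on `w`; in particular, `A_{≥k}` accepts exactly the words admitting at least `k`
accepting runs in `A`. -/
theorem ak_counts_k_tuples_of_runs [Fintype Q] (Δ : Q → A → Q → Prop)
    (lt : Q → Q → Prop) [IsStrictTotalOrder Q lt] (q₀ : Q) (F : Set Q)
    (k : ℕ) (w : List A) :
    {ρ : List ((Fin k → Q) × (Fin (k - 1) → Bool)) |
        RunFrom (AkTrans Δ lt k) (AkInit q₀ k) w ρ ∧
          (AkInit q₀ k :: ρ).getLast (List.cons_ne_nil _ _) ∈ AkFinal F k}.ncard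
      = {r : Fin k → List Q |
          (∀ ℓ, RunFrom Δ q₀ w (r ℓ) ∧
            (q₀ :: r ℓ).getLast (List.cons_ne_nil _ _) ∈ F) ∧
          ∀ ℓ : Fin (k - 1),
            List.Lex lt (q₀ :: r ⟨ℓ.val, by have := ℓ.isLt; omega⟩)
              (q₀ :: r ⟨ℓ.val + 1, by have := ℓ.isLt; omega⟩)}.ncard
    ∧ ((∃ ρ, RunFrom (AkTrans Δ lt k) (AkInit q₀ k) w ρ ∧
          (AkInit q₀ k :: ρ).getLast (List.cons_ne_nil _ _) ∈ AkFinal F k) ↔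
        k ≤ {ρ : List Q | RunFrom Δ q₀ w ρ ∧
              (q₀ :: ρ).getLast (List.cons_ne_nil _ _) ∈ F}.ncard) := by
  classical
  have himage := image_tracks_akAccepting (Δ := Δ) (lt := lt) (k := k) q₀ F w
  have hfin : {ρ : List Q | RunFrom Δ q₀ w ρ ∧
      (q₀ :: ρ).getLast (List.cons_ne_nil _ _) ∈ F}.Finite :=
    (finite_setOf_runFrom q₀ w).subset fun _ h => h.1
  refine ⟨?_, ?_⟩
  · calc _ = (tracks '' _).ncard :=
          Eq.symm (Set.InjOn.ncard_image ((injOn_tracks _ w).mono fun _ => And.left))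
      _ = _ := congrArg Set.ncard himage
  rw [hfin.le_ncard_iff_exists_chain (r := List.Lex lt)]
  constructor
  · rintro ⟨ρ, hρ⟩
    obtain ⟨hacc, hlex⟩ := himage.subset (Set.mem_image_of_mem tracks hρ)
    exact ⟨tracks ρ, fun ℓ => List.lex_cons_iff.1 (hlex ℓ), hacc⟩
  · rintro ⟨r, hlex, hacc⟩
    obtain ⟨ρ, hρ, -⟩ := himage.symm.subset ⟨hacc, fun ℓ => List.Lex.cons (hlex ℓ)⟩
    exact ⟨ρ, hρ⟩
end

section
/- If A is an aperiodic nondeterministic automaton with aperiodicity index m, then for every k ≥ 1 the automaton A_{≥k} (tracking k lexicographically ordered runs of A with difference bits) is aperiodic with aperiodicity index k(m+1). -/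
variable {Q Q' A R : Type*}

/-- Aperiodicity with a given index `m`: for all exponents `ℓ ≥ m`, the word powers
`u^ℓ` and `u^(ℓ+1)` connect the same pairs of states. -/
def AperiodicIdx (Δ : Q → A → Q → Prop) (m : ℕ) : Prop :=
  1 ≤ m ∧ ∀ (p q : Q) (u : List A), u ≠ [] → ∀ ℓ, m ≤ ℓ →
    (HasRun Δ p (wpow u ℓ) q ↔ HasRun Δ p (wpow u (ℓ + 1)) q)

/-!
Split a run of `A_{≥k}` on `u^L` into blocks `u^t`. The `k - 1` difference bits only ever get
set, so among `k` consecutive blocks there is one across which the bits stay constant. Across such a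
block the `k` tracks are runs of `A` that may be chosen freely, except that tracks tied by a clear
bit must stay equal; replacing each track by a run on `u^t'` with the same endpoints, chosen as a
function of those endpoints, keeps tied tracks equal, so the block can be pumped from `u^t` to
`u^t'`. With `(t, t') = (m, m + 1)` and `(m + 1, m)` this gives index `k (m + 1)`.
-/

open Finset

section Runs
variable {Δ : Q → A → Q → Prop}

theorem hasRun_nil_iff {p q : Q} : HasRun Δ p [] q ↔ p = q := by
  constructor
  · rintro ⟨_ | _, hρ, rfl⟩
    · rfl
    · exact hρ.elim
  · rintro rfl
    exact ⟨[], trivial, rfl⟩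

theorem hasRun_cons_iff {p q : Q} {a : A} {w : List A} :
    HasRun Δ p (a :: w) q ↔ ∃ r, Δ p a r ∧ HasRun Δ r w q := by
  constructor
  · rintro ⟨_ | ⟨r, ρ⟩, hρ, rfl⟩
    · exact hρ.elim
    · exact ⟨r, hρ.1, ρ, hρ.2, (List.getLast_cons_cons ..).symm⟩
  · rintro ⟨r, hr, ρ, hρ, rfl⟩
    exact ⟨r :: ρ, ⟨hr, hρ⟩, List.getLast_cons_cons ..⟩

theorem hasRun_append_iff {p q : Q} {w₁ w₂ : List A} :
    HasRun Δ p (w₁ ++ w₂) q ↔ ∃ r, HasRun Δ p w₁ r ∧ HasRun Δ r w₂ q := by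
  induction w₁ generalizing p with
  | nil => simp [hasRun_nil_iff]
  | cons a w ih => simp only [List.cons_append, hasRun_cons_iff, ih]; aesop

theorem HasRun.append {p r q : Q} {w₁ w₂ : List A} (h₁ : HasRun Δ p w₁ r)
    (h₂ : HasRun Δ r w₂ q) : HasRun Δ p (w₁ ++ w₂) q :=
  hasRun_append_iff.2 ⟨r, h₁, h₂⟩

end Runs

theorem wpow_one (u : List A) : wpow u 1 = u := by
  simp [wpow]

theorem wpow_add (u : List A) (a b : ℕ) : wpow u (a + b) = wpow u a ++ wpow u b := by
  simp only [wpow, List.replicate_add, List.flatten_append]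

section BitCount
variable {ι : Type*} [Fintype ι]

def bitCount (b : ι → Bool) : ℕ := #{i | b i = true}

theorem bitCount_le_card (b : ι → Bool) : bitCount b ≤ Fintype.card ι :=
  card_filter_le _ _

theorem bitCount_strictMono : StrictMono (bitCount : (ι → Bool) → ℕ) := by
  intro b b' hbb'
  obtain ⟨hle, j, hj⟩ := Pi.lt_def.1 hbb'
  refine card_lt_card (ssubset_iff_of_subset ?_ |>.2 ⟨j, ?_, ?_⟩)
  · intro i
    simpa using Bool.le_iff_imp.1 (hle i)
  · simp [(Bool.lt_iff.1 hj).2]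
  · simp [(Bool.lt_iff.1 hj).1]

end BitCount

section AkTrans
variable {Δ : Q → A → Q → Prop} {lt : Q → Q → Prop} {k : ℕ}
  {x y : (Fin k → Q) × (Fin (k - 1) → Bool)}
 

def lowTrack (j : Fin (k - 1)) : Fin k := ⟨j, by omega⟩

def highTrack (j : Fin (k - 1)) : Fin k := ⟨j + 1, by omega⟩

def ClearBitsAgree (x : (Fin k → Q) × (Fin (k - 1) → Bool)) : Prop :=
  ∀ j, x.2 j = false → x.1 (lowTrack j) = x.1 (highTrack j)

theorem AkTrans.clearBitsAgree {a : A} (h : AkTrans Δ lt k x a y) : ClearBitsAgree y := by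
  intro j hj
  rcases h.2 j with ⟨-, heq, -⟩ | ⟨-, hj'⟩
  · exact heq
  · simp [hj'] at hj

theorem AkTrans.bits_le {a : A} (h : AkTrans Δ lt k x a y) : x.2 ≤ y.2 := by
  intro j
  rcases h.2 j with ⟨hj, -, -⟩ | ⟨-, hj⟩
  · simp [hj]
  · simp [hj]

theorem HasRun.akTrans_bits_le {w : List A} (h : HasRun (AkTrans Δ lt k) x w y) :
    x.2 ≤ y.2 := by
  induction w generalizing x with
  | nil => rw [hasRun_nil_iff.1 h]
  | cons a w ih =>
    obtain ⟨z, hxz, hzy⟩ := hasRun_cons_iff.1 h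
    exact hxz.bits_le.trans (ih hzy)

theorem HasRun.akTrans_track {w : List A}
    (h : HasRun (AkTrans Δ lt k) x w y) (i : Fin k) : HasRun Δ (x.1 i) w (y.1 i) := by
  induction w generalizing x with
  | nil => rw [hasRun_nil_iff.1 h]; exact hasRun_nil_iff.2 rfl
  | cons a w ih =>
    obtain ⟨z, hxz, hzy⟩ := hasRun_cons_iff.1 h
    exact hasRun_cons_iff.2 ⟨z.1 i, hxz.1 i, ih hzy⟩

theorem ClearBitsAgree.of_hasRun {w : List A} (hx : ClearBitsAgree x)
    (h : HasRun (AkTrans Δ lt k) x w y) : ClearBitsAgree y := by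
  induction w generalizing x with
  | nil => rwa [← hasRun_nil_iff.1 h]
  | cons a w ih =>
    obtain ⟨z, hxz, hzy⟩ := hasRun_cons_iff.1 h
    exact ih hxz.clearBitsAgree hzy

theorem clearBitsAgree_of_hasRun {w : List A} (hw : w ≠ [])
    (h : HasRun (AkTrans Δ lt k) x w y) : ClearBitsAgree y := by
  obtain ⟨a, w, rfl⟩ := List.exists_cons_of_ne_nil hw
  obtain ⟨z, hxz, hzy⟩ := hasRun_cons_iff.1 h
  exact hxz.clearBitsAgree.of_hasRun hzy

theorem hasRun_akTrans_of_tracks {f g : Fin k → Q} {c : Fin (k - 1) → Bool} {w : List A}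
    (hf : ClearBitsAgree (f, c)) (hg : ClearBitsAgree (g, c))
    (h : ∀ i, HasRun Δ (f i) w (g i)) : HasRun (AkTrans Δ lt k) (f, c) w (g, c) := by
  induction w generalizing f with
  | nil => rw [funext fun i => hasRun_nil_iff.1 (h i)]; exact hasRun_nil_iff.2 rfl
  | cons a w ih =>
    choose σ hσ using fun p q (hpq : HasRun Δ p (a :: w) q) => hasRun_cons_iff.1 hpq
    set r : Fin k → Q := fun i => σ (f i) (g i) (h i)
    have hr : ClearBitsAgree (r, c) := by
      intro j hj
      simp only [r]
      congr 1
      exacts [hf j hj, hg j hj]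
    refine hasRun_cons_iff.2 ⟨(r, c), ⟨fun i => (hσ _ _ (h i)).1, fun j => ?_⟩,
      ih hr fun i => (hσ _ _ (h i)).2⟩
    cases hj : c j
    · exact Or.inl ⟨hj, hr j hj, hj⟩
    · exact Or.inr ⟨Or.inl hj, hj⟩

theorem HasRun.akTrans_of_bits_eq {w w' : List A}
    (hww' : ∀ p q, HasRun Δ p w q → HasRun Δ p w' q) (hx : ClearBitsAgree x) (hxy : x.2 = y.2)
    (h : HasRun (AkTrans Δ lt k) x w y) : HasRun (AkTrans Δ lt k) x w' y := by
  obtain ⟨f, c⟩ := x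
  obtain ⟨g, d⟩ := y
  obtain rfl : c = d := hxy
  exact hasRun_akTrans_of_tracks hx (hx.of_hasRun h) fun i => hww' _ _ (h.akTrans_track i)

end AkTrans

section Pumping
variable {Δ : Q → A → Q → Prop} {lt : Q → Q → Prop} {k : ℕ}
  {x y : (Fin k → Q) × (Fin (k - 1) → Bool)} {u : List A} {t t' : ℕ}

/-- Pigeonhole: one of the `n + 1` blocks `u^t` leaves the bits unchanged, and that block
is pumped. -/
theorem HasRun.akTrans_pump_block
    (htt' : ∀ p q, HasRun Δ p (wpow u t) q → HasRun Δ p (wpow u t') q) (n : ℕ)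
    (hx : ClearBitsAgree x) (hcount : bitCount y.2 ≤ bitCount x.2 + n)
    (h : HasRun (AkTrans Δ lt k) x (wpow u ((n + 1) * t)) y) :
    HasRun (AkTrans Δ lt k) x (wpow u (n * t + t')) y := by
  induction n generalizing x with
  | zero =>
    rw [zero_add, one_mul] at h
    rw [zero_mul, zero_add]
    have hxy : x.2 = y.2 := h.akTrans_bits_le.eq_of_not_lt fun hlt =>
      (bitCount_strictMono hlt).not_ge hcount
    exact h.akTrans_of_bits_eq htt' hx hxy
  | succ n ih =>
    rw [add_one_mul, add_comm _ t, wpow_add, hasRun_append_iff] at h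
    obtain ⟨z, hxz, hzy⟩ := h
    by_cases hxz_bits : x.2 = z.2
    · rw [add_comm, wpow_add]
      exact (hxz.akTrans_of_bits_eq htt' hx hxz_bits).append hzy
    · have hlt := bitCount_strictMono (lt_of_le_of_ne hxz.akTrans_bits_le hxz_bits)
      have hzy' := ih (hx.of_hasRun hxz) (by omega) hzy
      rw [add_one_mul, add_comm _ t, add_assoc, wpow_add]
      exact hxz.append hzy'

theorem HasRun.akTrans_wpow_replace (hk : 1 ≤ k) (hu : u ≠ [])
    (htt' : ∀ p q, HasRun Δ p (wpow u t) q → HasRun Δ p (wpow u t') q) {L : ℕ}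
    (hL : 1 + k * t ≤ L) (h : HasRun (AkTrans Δ lt k) x (wpow u L) y) :
    HasRun (AkTrans Δ lt k) x (wpow u (L - t + t')) y := by
  obtain ⟨n, rfl⟩ : ∃ n, k = n + 1 := ⟨k - 1, by omega⟩
  obtain ⟨r, rfl⟩ : ∃ r, L = 1 + ((n + 1) * t + r) := ⟨L - 1 - (n + 1) * t, by omega⟩
  rw [wpow_add, wpow_add, wpow_one, hasRun_append_iff] at h
  obtain ⟨z₀, hxz₀, h⟩ := h
  obtain ⟨z₁, hz₀z₁, hz₁y⟩ := hasRun_append_iff.1 h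
  -- the initial state need not tie the tracks of its clear bits, but every later state does
  have hz₀ : ClearBitsAgree z₀ := clearBitsAgree_of_hasRun hu hxz₀
  have hcount : bitCount z₁.2 ≤ bitCount z₀.2 + n :=
    (bitCount_le_card z₁.2).trans (by simp)
  have hpumped := hz₀z₁.akTrans_pump_block htt' n hz₀ hcount
  have hlen : 1 + ((n + 1) * t + r) - t + t' = 1 + (n * t + t' + r) := by
    rw [add_one_mul]; omega
  rw [hlen, wpow_add, wpow_add, wpow_one]
  exact hxz₀.append (hpumped.append hz₁y)

end Pumping

theorem aperiodicIdx_akTrans_general (Δ : Q → A → Q → Prop) (lt : Q → Q → Prop)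
    (m k : ℕ) (hk : 1 ≤ k)
    (h : AperiodicIdx Δ m) : AperiodicIdx (AkTrans Δ lt k) (k * (m + 1)) := by
  obtain ⟨-, hap⟩ := h
  have hkm : k * (m + 1) = k * m + k := mul_add_one k m
  have hmk : m ≤ k * m := Nat.le_mul_of_pos_left m hk
  refine ⟨by omega, fun p q u hu ℓ hℓ => ⟨fun hrun => ?_, fun hrun => ?_⟩⟩
  · have := hrun.akTrans_wpow_replace hk hu (fun p q => (hap p q u hu m le_rfl).1) (by omega)
    rwa [show ℓ - m + (m + 1) = ℓ + 1 by omega] at this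
  · have := hrun.akTrans_wpow_replace hk hu (fun p q => (hap p q u hu m le_rfl).2) (by omega)
    rwa [show ℓ + 1 - (m + 1) + m = ℓ by omega] at this

/-- If `A` is aperiodic with index `m`, then `A_{≥k}` is aperiodic with index `k(m+1)`. -/
theorem aperiodicIdx_akTrans (Δ : Q → A → Q → Prop) (lt : Q → Q → Prop)
    [IsStrictTotalOrder Q lt] (m k : ℕ) (hk : 1 ≤ k)
    (h : AperiodicIdx Δ m) : AperiodicIdx (AkTrans Δ lt k) (k * (m + 1)) :=
  aperiodicIdx_akTrans_general Δ lt m k hk h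
end

section
/- In the projection construction A' (with states Q × {0,1}): if A is SCC-unambiguous then A' is SCC-unambiguous. Moreover, two states (p,b) and (q,c) of A' lie in the same SCC only if b = c and p, q lie in the same SCC of A. -/
variable {Q Q' A R : Type*}

/-- Transition relation of the projection construction `A'` over `Σ_𝒱`, with states
`Q × Bool`: level-preserving transitions simulate letters with `y`-bit `0`, and
transitions from level `false` to level `true` simulate letters with `y`-bit `1`. -/
def projTrans (Δ : Q → (A × Bool) → Q → Prop) :
    (Q × Bool) → A → (Q × Bool) → Prop :=
  fun p a q =>
    (p.2 = q.2 ∧ Δ p.1 (a, false) q.1) ∨ (p.2 = false ∧ q.2 = true ∧ Δ p.1 (a, true) q.1)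

/-- Weight function of the projection construction. -/
def projWgt (wgt : Q → (A × Bool) → Q → R) :
    (Q × Bool) → A → (Q × Bool) → R :=
  fun p a q => if p.2 = q.2 then wgt p.1 (a, false) q.1 else wgt p.1 (a, true) q.1

/-- `(w̄, y ↦ i)`: the word over `Σ_𝒱 × Bool` whose projection is `w̄` and whose
`Bool`-component is `true` exactly at (0-indexed) position `i`. -/
def markWord (w : List A) (i : ℕ) : List (A × Bool) :=
  w.zipIdx.map fun ja => (ja.1, ja.2 == i)

/-!
Along a transition of `A'` the level bit can only go up, from `false` to `true`. Hence the
states of a cycle of `A'`, and of any run between two states of one SCC, all lie on one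
level `b`, and on a fixed level `A'` is a copy of `A` reading only letters with `y`-bit `0`.
So runs inside an SCC of `A'` are runs of `A` inside an SCC, tagged with the constant level
`b`, and unambiguity transfers.
-/

section Monotone

variable {α : Type*} {Δ : Q → A → Q → Prop} {f : Q → α}

theorem RunFrom.le_of_mem [Preorder α] (hf : ∀ p a q, Δ p a q → f p ≤ f q) :
    ∀ {p : Q} {u : List A} {ρ : List Q}, RunFrom Δ p u ρ → ∀ x ∈ ρ, f p ≤ f x
  | _, [], [], _ => by simp
  | _, [], _ :: _, hρ => hρ.elim
  | _, _ :: _, [], hρ => hρ.elim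
  | p, _ :: _, q :: _, ⟨hpq, hρ⟩ => by
    rintro x (_ | ⟨_, hx⟩)
    · exact hf _ _ _ hpq
    · exact (hf _ _ _ hpq).trans (hρ.le_of_mem hf x hx)

theorem RunFrom.le_getLast [Preorder α] (hf : ∀ p a q, Δ p a q → f p ≤ f q) :
    ∀ {p : Q} {u : List A} {ρ : List Q}, RunFrom Δ p u ρ →
      ∀ x ∈ p :: ρ, f x ≤ f ((p :: ρ).getLast (List.cons_ne_nil _ _))
  | _, [], [], _ => by simp
  | _, [], _ :: _, hρ => hρ.elim
  | _, _ :: _, [], hρ => hρ.elim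
  | p, _ :: _, q :: ρ, ⟨hpq, hρ⟩ => by
    rw [List.getLast_cons (List.cons_ne_nil _ _)]
    rintro x (_ | ⟨_, hx⟩)
    · exact (hf _ _ _ hpq).trans (hρ.le_getLast hf q List.mem_cons_self)
    · exact hρ.le_getLast hf x hx

theorem RunFrom.forall_mem_eq_of_getLast [PartialOrder α]
    (hf : ∀ p a q, Δ p a q → f p ≤ f q) {p : Q} {u : List A} {ρ : List Q}
    (hρ : RunFrom Δ p u ρ)
    (hlast : f ((p :: ρ).getLast (List.cons_ne_nil _ _)) = f p) : ∀ x ∈ ρ, f x = f p :=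
  fun x hx => le_antisymm (hlast ▸ hρ.le_getLast hf x (List.mem_cons_of_mem _ hx))
    (hρ.le_of_mem hf x hx)

theorem HasRun.le [Preorder α] (hf : ∀ p a q, Δ p a q → f p ≤ f q) {p q : Q} {u : List A}
    (h : HasRun Δ p u q) : f p ≤ f q := by
  obtain ⟨ρ, hρ, rfl⟩ := h
  exact hρ.le_getLast hf p List.mem_cons_self

end Monotone

theorem RunFrom.of_map {B : Type*} {Δ : Q → A → Q → Prop} {Δ' : Q' → B → Q' → Prop}
    {g : Q → Q'} {h : B → A} (hΔ : ∀ p b q, Δ' (g p) b (g q) → Δ p (h b) q) :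
    ∀ {p : Q} {u : List B} {ρ : List Q},
      RunFrom Δ' (g p) u (ρ.map g) → RunFrom Δ p (u.map h) ρ
  | _, [], [], _ => trivial
  | _, [], _ :: _, hρ => hρ.elim
  | _, _ :: _, [], hρ => hρ.elim
  | _, _ :: _, _ :: _, ⟨hpq, hρ⟩ => ⟨hΔ _ _ _ hpq, RunFrom.of_map hΔ hρ⟩

section Projection

variable {Δ : Q → (A × Bool) → Q → Prop}

theorem projTrans_level_le (s : Q × Bool) (a : A) (t : Q × Bool) (h : projTrans Δ s a t) :
    s.2 ≤ t.2 := by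
  rcases h with ⟨hst, _⟩ | ⟨hs, _, _⟩
  · exact hst.le
  · exact hs ▸ Bool.false_le _

theorem projTrans_same_level {b : Bool} (p : Q) (a : A) (q : Q)
    (h : projTrans Δ (p, b) a (q, b)) : Δ p (a, false) q := by
  rcases h with ⟨_, hpq⟩ | ⟨hb, hb', _⟩
  · exact hpq
  · exact absurd (hb.symm.trans hb') Bool.false_ne_true

theorem RunFrom.exists_eq_map_of_projTrans {p q : Q} {b : Bool} {u : List A}
    {ρ : List (Q × Bool)} (hρ : RunFrom (projTrans Δ) (p, b) u ρ)
    (hlast : ((p, b) :: ρ).getLast (List.cons_ne_nil _ _) = (q, b)) :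
    ∃ ρ' : List Q, ρ = ρ'.map (·, b) ∧ RunFrom Δ p (u.map (·, false)) ρ' ∧
      (p :: ρ').getLast (List.cons_ne_nil _ _) = q := by
  have hlevel : ∀ x ∈ ρ, x.2 = b :=
    hρ.forall_mem_eq_of_getLast (f := Prod.snd) projTrans_level_le (by rw [hlast])
  have hρ_eq : ρ = (ρ.map Prod.fst).map (·, b) := by
    rw [List.map_map]
    conv_lhs => rw [← List.map_id ρ]
    exact List.map_congr_left fun x hx => Prod.ext rfl (hlevel x hx)
  refine ⟨ρ.map Prod.fst, hρ_eq, RunFrom.of_map (g := (·, b))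
    projTrans_same_level (hρ_eq ▸ hρ), ?_⟩
  rw [hρ_eq] at hlast
  have hmap := List.getLast_map (f := (·, b)) (l := p :: ρ.map Prod.fst) (List.cons_ne_nil _ _)
  exact congrArg Prod.fst (hmap.symm.trans hlast)

theorem HasRun.of_projTrans {p q : Q} {b : Bool} {u : List A}
    (h : HasRun (projTrans Δ) (p, b) u (q, b)) : HasRun Δ p (u.map (·, false)) q := by
  obtain ⟨ρ, hρ, hlast⟩ := h
  obtain ⟨ρ', -, hρ', hlast'⟩ := hρ.exists_eq_map_of_projTrans hlast
  exact ⟨ρ', hρ', hlast'⟩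

end Projection

/-- If `A` is SCC-unambiguous then the projection construction `A'` is
SCC-unambiguous; moreover, two states `(p,b)` and `(q,c)` of `A'` lie in the same SCC
only if `b = c` and `p, q` lie in the same SCC of `A`. -/
theorem sccUnambiguous_projTrans (Δ : Q → (A × Bool) → Q → Prop)
    (h : SCCUnambiguous Δ) :
    SCCUnambiguous (projTrans Δ) ∧
      ∀ (p q : Q) (b c : Bool),
        SameSCC (projTrans Δ) (p, b) (q, c) → b = c ∧ SameSCC Δ p q := by
  have sameSCC : ∀ (p q : Q) (b c : Bool),
      SameSCC (projTrans Δ) (p, b) (q, c) → b = c ∧ SameSCC Δ p q := by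
    rintro p q b c (heq | ⟨⟨u, hu, hpq⟩, ⟨v, hv, hqp⟩⟩)
    · obtain ⟨rfl, rfl⟩ := Prod.mk.inj heq
      exact ⟨rfl, Or.inl rfl⟩
    · obtain rfl : b = c :=
        le_antisymm (hpq.le projTrans_level_le) (hqp.le projTrans_level_le)
      exact ⟨rfl, Or.inr ⟨⟨_, by simpa using hu, hpq.of_projTrans⟩,
        ⟨_, by simpa using hv, hqp.of_projTrans⟩⟩⟩
  refine ⟨?_, sameSCC⟩
  rintro ⟨p, b⟩ ⟨q, c⟩ hscc u ρ₁ ρ₂ hu h₁ h₂ hlast₁ hlast₂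
  obtain ⟨rfl, hpq⟩ := sameSCC p q b c hscc
  obtain ⟨ρ₁', rfl, hρ₁', hlast₁'⟩ := h₁.exists_eq_map_of_projTrans hlast₁
  obtain ⟨ρ₂', rfl, hρ₂', hlast₂'⟩ := h₂.exists_eq_map_of_projTrans hlast₂
  rw [h p q hpq _ ρ₁' ρ₂' (by simpa using hu) hρ₁' hρ₂' hlast₁' hlast₂']
end
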